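/- arXiv:1606.07708 — 2 statements merged into one kernel-verified Lean document; each statement's English description precedes it below -/
import Mathlib

section
/- For every x ∈ ℝ³, the sum over j = 1,2,3 of (D_j A)(x) applied to the j-th column of A(x)^T equals −2(α²|x|² + 1)x, where D_j denotes the partial derivative with respect to the j-th coordinate of x. -/
noncomputable section

abbrev V3 := Fin 3 → ℝ

/-- Euclidean dot product on `ℝ³`. -/
def dot3 (x y : V3) : ℝ := ∑ i, x i * y i

/-- Euclidean norm on `ℝ³`. -/
def nrm3 (x : V3) : ℝ := Real.sqrt (dot3 x x)

/-- The antisymmetric matrix of the cross product: `Lmat x * y = x ∧ y`. -/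
def Lmat (x : V3) : Matrix (Fin 3) (Fin 3) ℝ :=
  !![0, -x 2, x 1; x 2, 0, -x 0; -x 1, x 0, 0]

/-- The operator `A(x) = α |x|² I - α x xᵀ - L(x)`. -/
def Amat (α : ℝ) (x : V3) : Matrix (Fin 3) (Fin 3) ℝ :=
  (α * dot3 x x) • (1 : Matrix (Fin 3) (Fin 3) ℝ) - α • Matrix.vecMulVec x x - Lmat x

/-! Writing `c_j` for the `j`-th row of `A = A(x)`, one has
`D_j A · c_j = 2α x_j c_j - α ((x·c_j) e_j + c_jj x) - e_j ∧ c_j`, so the sum is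
`2α xᵀA - α (A x + (tr A) x) - Σ_j e_j ∧ c_j`. Both `x xᵀ - |x|² I` and `L(x)` kill `x` from either
side, so `xᵀA = A x = 0`; `tr A = 2α|x|²`; and since `c_j = α|x|² e_j - α x_j x + x ∧ e_j`, the vector
triple product gives `Σ_j e_j ∧ c_j = Σ_j e_j ∧ (x ∧ e_j) = 3x - x = 2x`. -/

open Matrix

theorem dot3_eq_dotProduct (x y : V3) : dot3 x y = x ⬝ᵥ y := rfl

theorem Lmat_mulVec (x y : V3) : Lmat x *ᵥ y = x ⨯₃ y := by
  ext i
  fin_cases i <;>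
    simp only [Lmat, cross_apply, mulVec, dotProduct, Fin.sum_univ_three, of_apply, cons_val',
      cons_val_fin_one, cons_val_zero, cons_val_one, cons_val, Fin.isValue, Fin.zero_eta, Fin.mk_one,
      Fin.reduceFinMk] <;>
    ring

theorem vecMul_Lmat (x y : V3) : y ᵥ* Lmat x = y ⨯₃ x := by
  ext i
  fin_cases i <;>
    simp only [Lmat, cross_apply, vecMul, dotProduct, Fin.sum_univ_three, of_apply, cons_val',
      cons_val_fin_one, cons_val_zero, cons_val_one, cons_val, Fin.isValue, Fin.zero_eta, Fin.mk_one,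
      Fin.reduceFinMk] <;>
    ring

theorem trace_Lmat (x : V3) : (Lmat x).trace = 0 := by
  simp [Lmat, trace, Fin.sum_univ_three]

theorem Lmat_apply_eq_cross (y : V3) (i k : Fin 3) : Lmat y i k = (y ⨯₃ Pi.single k 1) i := by
  rw [← Lmat_mulVec, mulVec_single_one]; rfl

theorem Amat_mulVec_self (α : ℝ) (x : V3) : Amat α x *ᵥ x = 0 := by
  simp [Amat, sub_mulVec, smul_mulVec, vecMulVec_mulVec, Lmat_mulVec, dot3_eq_dotProduct, smul_smul]

theorem vecMul_Amat_self (α : ℝ) (x : V3) : x ᵥ* Amat α x = 0 := by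
  simp [Amat, vecMul_sub, vecMul_smul, vecMul_vecMulVec, vecMul_Lmat, dot3_eq_dotProduct, smul_smul]

theorem trace_Amat (α : ℝ) (x : V3) : (Amat α x).trace = 2 * α * dot3 x x := by
  simp only [Amat, dot3_eq_dotProduct, trace_sub, trace_smul, trace_one, Fintype.card_fin,
    Nat.cast_ofNat, smul_eq_mul, trace_vecMulVec, trace_Lmat, sub_zero]
  ring

theorem Amat_row (α : ℝ) (x : V3) (j : Fin 3) :
    Amat α x j = (α * dot3 x x) • Pi.single j 1 - (α * x j) • x - Pi.single j 1 ⨯₃ x := by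
  change (Amat α x).row j = _
  rw [← single_one_vecMul, Amat, vecMul_sub, vecMul_sub, vecMul_smul, vecMul_smul, vecMul_one,
    vecMul_vecMulVec, vecMul_Lmat, single_one_dotProduct, smul_smul]

theorem sum_single_cross_Amat_row (α : ℝ) (x : V3) :
    ∑ j, Pi.single j 1 ⨯₃ Amat α x j = (2 : ℝ) • x := by
  have hx : ∑ j, x j • Pi.single j 1 = x := (pi_eq_sum_univ' x).symm
  have hcross : ∑ j, (α * x j) • Pi.single j 1 ⨯₃ x = 0 := by
    calc ∑ j, (α * x j) • Pi.single j 1 ⨯₃ x = (α • ∑ j, x j • Pi.single j 1) ⨯₃ x := by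
          simp only [Finset.smul_sum, smul_smul, map_sum, LinearMap.sum_apply, map_smul,
            LinearMap.smul_apply]
      _ = 0 := by rw [hx, map_smul, LinearMap.smul_apply, cross_self, smul_zero]
  simp only [Amat_row, map_sub, map_smul, cross_self, cross_cross_eq_smul_sub_smul',
    single_one_dotProduct, Pi.single_eq_same, smul_zero, zero_sub, Finset.sum_sub_distrib,
    Finset.sum_neg_distrib, hcross, hx, one_smul, Finset.sum_const, Finset.card_univ, Fintype.card_fin]
  module

theorem Amat_apply (α : ℝ) (y : V3) (i k : Fin 3) :
    Amat α y i k = α * dot3 y y * (1 : Matrix (Fin 3) (Fin 3) ℝ) i k - α * (y i * y k) - Lmat y i k := by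
  simp [Amat, vecMulVec_apply]

-- `dAmat α x v = DA(x)[v]`, so the paper's `D_j A(x)` is `dAmat α x (Pi.single j 1)`.
def dAmat (α : ℝ) (x v : V3) : Matrix (Fin 3) (Fin 3) ℝ :=
  (2 * α * dot3 x v) • (1 : Matrix (Fin 3) (Fin 3) ℝ) - α • (vecMulVec v x + vecMulVec x v) - Lmat v

theorem fderiv_Amat_apply (α : ℝ) (x v : V3) (i k : Fin 3) :
    fderiv ℝ (fun y => Amat α y i k) x v = dAmat α x v i k := by
  have hdot : HasFDerivAt (fun y : V3 => dot3 y y)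
      (∑ l, (x l • ContinuousLinearMap.proj (R := ℝ) (φ := fun _ : Fin 3 => ℝ) l +
        x l • ContinuousLinearMap.proj l)) x :=
    HasFDerivAt.fun_sum fun l _ => (hasFDerivAt_apply l x).fun_mul (hasFDerivAt_apply l x)
  have hL : HasFDerivAt (fun y : V3 => Lmat y i k)
      (LinearMap.proj i ∘ₗ crossProduct.flip (Pi.single k 1)).toContinuousLinearMap x := by
    convert ContinuousLinearMap.hasFDerivAt _ using 1
    ext y
    simp [Lmat_apply_eq_cross]
  have hA := (((hdot.const_mul α).mul_const ((1 : Matrix (Fin 3) (Fin 3) ℝ) i k)).fun_sub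
    (((hasFDerivAt_apply i x).fun_mul (hasFDerivAt_apply k x)).const_mul α)).fun_sub hL
  rw [funext (Amat_apply α · i k), hA.fderiv]
  simp only [_root_.sub_apply, _root_.smul_apply, _root_.sum_apply, _root_.add_apply,
    ContinuousLinearMap.proj_apply,
    LinearMap.coe_toContinuousLinearMap', LinearMap.coe_comp, LinearMap.coe_proj,
    Function.comp_apply, Function.eval, LinearMap.flip_apply, dAmat, dot3, Matrix.sub_apply,
    Matrix.smul_apply, Matrix.add_apply, vecMulVec_apply, Lmat_apply_eq_cross, smul_eq_mul,
    Finset.sum_add_distrib]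
  ring

theorem dAmat_mulVec (α : ℝ) (x v c : V3) :
    dAmat α x v *ᵥ c = (2 * α * dot3 x v) • c - α • ((x ⬝ᵥ c) • v + (v ⬝ᵥ c) • x) - v ⨯₃ c := by
  simp [dAmat, sub_mulVec, add_mulVec, smul_mulVec, vecMulVec_mulVec, Lmat_mulVec]

theorem sum_dAmat_mulVec_row (α : ℝ) (x : V3) (M : Matrix (Fin 3) (Fin 3) ℝ) :
    ∑ j, dAmat α x (Pi.single j 1) *ᵥ M j
      = (2 * α) • (x ᵥ* M) - α • (M *ᵥ x + M.trace • x) - ∑ j, Pi.single j 1 ⨯₃ M j := by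
  have hmulVec : ∑ j, (x ⬝ᵥ M j) • Pi.single j 1 = M *ᵥ x := by
    rw [pi_eq_sum_univ' (M *ᵥ x)]
    simp only [mulVec, dotProduct_comm]
  simp only [dAmat_mulVec, dot3_eq_dotProduct, dotProduct_single_one, single_one_dotProduct,
    Finset.sum_sub_distrib, Finset.sum_add_distrib, ← Finset.smul_sum, mul_smul, vecMul_eq_sum,
    trace, diag, ← Finset.sum_smul, hmulVec]

theorem stmt1 (α : ℝ) (x : V3) :
    ∑ j : Fin 3,
      (Matrix.of fun i k =>
        fderiv ℝ (fun y : V3 => Amat α y i k) x (Pi.single j 1)).mulVec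
        (fun k => (Amat α x).transpose k j)
      = (-2 * (α ^ 2 * dot3 x x + 1)) • x := by
  have hD (j : Fin 3) : (Matrix.of fun i k => fderiv ℝ (fun y : V3 => Amat α y i k) x (Pi.single j 1))
      = dAmat α x (Pi.single j 1) := Matrix.ext fun i k => fderiv_Amat_apply α x _ i k
  simp only [hD]
  refine (sum_dAmat_mulVec_row α x (Amat α x)).trans ?_
  rw [vecMul_Amat_self, Amat_mulVec_self, trace_Amat, sum_single_cross_Amat_row]
  module
end
end

section
/- Let F ∈ C¹(ℝ₊) tend to +∞, with F(t) > 0 and F'(t) > 0 for all t ≥ t₀ for some t₀, and lim_{t→∞} F'(t) = a > 0. Then for any bounded continuous function g, liminf_{t→∞} e^{−F(t)} ∫₀^t g(u) e^{F(u)} du ≥ (1/a) liminf_{t→∞} g(t). -/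
open Filter

noncomputable section

theorem stmt6 (F F' g : ℝ → ℝ) (a t₀ : ℝ)
    (hderiv : ∀ t : ℝ, 0 ≤ t → HasDerivAt F (F' t) t)
    (hF'cont : ContinuousOn F' (Set.Ici 0))
    (hFtop : Tendsto F atTop atTop)
    (hpos : ∀ t : ℝ, t₀ ≤ t → 0 < F t ∧ 0 < F' t)
    (ha : Tendsto F' atTop (nhds a)) (ha0 : 0 < a)
    (hg : Continuous g) (hbd : ∃ K : ℝ, ∀ t : ℝ, |g t| ≤ K) :
    (1 / a) * liminf g atTop ≤
      liminf (fun t : ℝ => Real.exp (-F t) * ∫ u in (0:ℝ)..t, g u * Real.exp (F u))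
        atTop := by
  obtain ⟨K, hK⟩ := hbd
  have hK0 : 0 ≤ K := le_trans (abs_nonneg _) (hK 0)
  set L := liminf g atTop with hLdef
  set H : ℝ → ℝ := fun t => Real.exp (-F t) * ∫ u in (0:ℝ)..t, g u * Real.exp (F u) with hHdef
  have hFc : ContinuousOn F (Set.Ici 0) := fun x hx =>
    (hderiv x hx).continuousAt.continuousWithinAt
  have hgbd : IsBoundedUnder (· ≥ ·) atTop g :=
    ⟨-K, eventually_map.mpr (Eventually.of_forall fun t => (abs_le.mp (hK t)).1)⟩
  have key : ∀ ε : ℝ, ε ∈ Set.Ioo 0 a →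
      min ((L - ε) / (a + ε)) ((L - ε) / (a - ε)) ≤ liminf H atTop := by
    rintro ε ⟨hε0, hεa⟩
    have hgev : ∀ᶠ t in atTop, L - ε < g t :=
      eventually_lt_of_lt_liminf (by linarith) hgbd
    have hF'ev : ∀ᶠ t in atTop, |F' t - a| < ε := by
      have := Metric.tendsto_nhds.mp ha ε hε0
      simpa [Real.dist_eq] using this
    obtain ⟨N, hN⟩ := eventually_atTop.mp (hgev.and hF'ev)
    set T := max N (max t₀ 0) with hTdef
    have hT0 : (0:ℝ) ≤ T := le_trans (le_max_right t₀ 0) (le_max_right _ _)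
    have hTN : N ≤ T := le_max_left _ _
    have hTt₀ : t₀ ≤ T := le_trans (le_max_left t₀ 0) (le_max_right _ _)
    have haux : ∀ u : ℝ, T ≤ u → L - ε < g u ∧ a - ε ≤ F' u ∧ F' u ≤ a + ε := by
      intro u hu
      obtain ⟨h1, h2⟩ := hN u (le_trans hTN hu)
      rw [abs_lt] at h2
      exact ⟨h1, by linarith, by linarith⟩
    set C := ∫ u in (0:ℝ)..T, g u * Real.exp (F u) with hCdef
    set m := min ((L - ε) / (a + ε)) ((L - ε) / (a - ε)) with hmdef
    set B : ℝ → ℝ := fun t => C * Real.exp (-F t) +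
      min ((L - ε) * ((1 - Real.exp (F T - F t)) / (a + ε))) ((L - ε) / (a - ε)) with hBdef
    have haε : 0 < a + ε := by linarith
    have haε' : 0 < a - ε := by linarith
    -- pointwise bounds
    have hmain : ∀ t : ℝ, T ≤ t → B t ≤ H t ∧ H t ≤ |C| + K * (1 / (a - ε)) := by
      intro t ht
      have hIcc : Set.uIcc T t = Set.Icc T t := Set.uIcc_of_le ht
      have hIcc0 : Set.uIcc (0:ℝ) T = Set.Icc 0 T := Set.uIcc_of_le hT0
      have hsub : Set.Icc T t ⊆ Set.Ici (0:ℝ) := fun x hx => le_trans hT0 hx.1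
      have hsub0 : Set.Icc (0:ℝ) T ⊆ Set.Ici (0:ℝ) := fun x hx => hx.1
      have hcontE : ContinuousOn (fun u => Real.exp (F u)) (Set.Icc T t) :=
        Real.continuous_exp.comp_continuousOn (hFc.mono hsub)
      have hintE : IntervalIntegrable (fun u => Real.exp (F u)) MeasureTheory.volume T t :=
        (by rw [hIcc]; exact hcontE : ContinuousOn _ (Set.uIcc T t)).intervalIntegrable
      have hintG : IntervalIntegrable (fun u => g u * Real.exp (F u)) MeasureTheory.volume T t :=
        (by rw [hIcc]; exact (hg.continuousOn.mul hcontE) :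
          ContinuousOn _ (Set.uIcc T t)).intervalIntegrable
      have hintG0 : IntervalIntegrable (fun u => g u * Real.exp (F u))
          MeasureTheory.volume 0 T :=
        (by rw [hIcc0]
            exact hg.continuousOn.mul
              (Real.continuous_exp.comp_continuousOn (hFc.mono hsub0)) :
          ContinuousOn _ (Set.uIcc (0:ℝ) T)).intervalIntegrable
      have hintD : IntervalIntegrable (fun u => Real.exp (F u) * F' u)
          MeasureTheory.volume T t :=
        (by rw [hIcc]; exact hcontE.mul (hF'cont.mono hsub) :
          ContinuousOn _ (Set.uIcc T t)).intervalIntegrable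
      have hintC : ∀ c : ℝ, IntervalIntegrable (fun u => c * Real.exp (F u))
          MeasureTheory.volume T t := fun c =>
        (by rw [hIcc]; exact continuousOn_const.mul hcontE :
          ContinuousOn _ (Set.uIcc T t)).intervalIntegrable
      set I := ∫ u in T..t, Real.exp (F u) with hIdef
      set J := ∫ u in T..t, g u * Real.exp (F u) with hJdef
      have hftc : ∫ u in T..t, Real.exp (F u) * F' u = Real.exp (F t) - Real.exp (F T) := by
        apply intervalIntegral.integral_eq_sub_of_hasDerivAt (f := fun u => Real.exp (F u))
        · intro x hx
          rw [hIcc] at hx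
          exact (hderiv x (hsub hx)).exp
        · exact hintD
      have h1 : (a - ε) * I ≤ Real.exp (F t) - Real.exp (F T) := by
        rw [← hftc, ← intervalIntegral.integral_const_mul]
        apply intervalIntegral.integral_mono_on ht (hintC _) hintD
        intro x hx
        have h := (haux x hx.1).2.1
        calc (a - ε) * Real.exp (F x) ≤ F' x * Real.exp (F x) :=
              mul_le_mul_of_nonneg_right h (Real.exp_pos _).le
          _ = Real.exp (F x) * F' x := mul_comm _ _
      have h2 : Real.exp (F t) - Real.exp (F T) ≤ (a + ε) * I := by
        rw [← hftc, ← intervalIntegral.integral_const_mul]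
        apply intervalIntegral.integral_mono_on ht hintD (hintC _)
        intro x hx
        have h := (haux x hx.1).2.2
        calc Real.exp (F x) * F' x = F' x * Real.exp (F x) := mul_comm _ _
          _ ≤ (a + ε) * Real.exp (F x) :=
              mul_le_mul_of_nonneg_right h (Real.exp_pos _).le
      have h3 : (L - ε) * I ≤ J := by
        rw [← intervalIntegral.integral_const_mul]
        apply intervalIntegral.integral_mono_on ht (hintC _) hintG
        intro x hx
        exact mul_le_mul_of_nonneg_right ((haux x hx.1).1).le (Real.exp_pos _).le
      have h3' : J ≤ K * I := by
        rw [hJdef, hIdef, ← intervalIntegral.integral_const_mul]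
        apply intervalIntegral.integral_mono_on ht hintG (hintC _)
        intro x hx
        exact mul_le_mul_of_nonneg_right ((abs_le.mp (hK x)).2) (Real.exp_pos _).le
      have h4 : 0 ≤ I :=
        intervalIntegral.integral_nonneg ht fun u _ => (Real.exp_pos _).le
      have hsplit : (∫ u in (0:ℝ)..t, g u * Real.exp (F u)) = C + J :=
        (intervalIntegral.integral_add_adjacent_intervals hintG0 hintG).symm
      have hHe : H t = C * Real.exp (-F t) + Real.exp (-F t) * J := by
        simp only [hHdef, hsplit]; ring
      set e := Real.exp (-F t) with hedef
      have he0 : 0 < e := Real.exp_pos _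
      have he1 : e ≤ 1 := by
        rw [hedef, Real.exp_le_one_iff]
        have := (hpos t (le_trans hTt₀ ht)).1
        linarith
      have heFt : e * Real.exp (F t) = 1 := by
        rw [hedef, ← Real.exp_add]; simp
      set δ := Real.exp (F T - F t) with hδdef
      have hδe : δ = Real.exp (F T) * e := by
        rw [hδdef, hedef, ← Real.exp_add]; ring_nf
      have hδ0 : 0 < δ := Real.exp_pos _
      have e1 : e * (Real.exp (F t) - Real.exp (F T)) = 1 - δ := by
        rw [mul_sub, heFt, hδe]; ring
      set X := e * I with hXdef
      have hX0 : 0 ≤ X := mul_nonneg he0.le h4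
      have hXlow : (1 - δ) / (a + ε) ≤ X := by
        rw [div_le_iff₀ haε]
        have h2e := mul_le_mul_of_nonneg_left h2 he0.le
        rw [e1] at h2e
        have hx : e * ((a + ε) * I) = X * (a + ε) := by rw [hXdef]; ring
        linarith [hx ▸ h2e]
      have hXhigh : X ≤ 1 / (a - ε) := by
        rw [le_div_iff₀ haε']
        have h1e := mul_le_mul_of_nonneg_left h1 he0.le
        rw [e1] at h1e
        have hx : e * ((a - ε) * I) = X * (a - ε) := by rw [hXdef]; ring
        linarith [hx ▸ h1e]
      have h5 : (L - ε) * X ≤ e * J := by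
        have h := mul_le_mul_of_nonneg_left h3 he0.le
        calc (L - ε) * X = e * ((L - ε) * I) := by rw [hXdef]; ring
          _ ≤ e * J := h
      have h5' : e * J ≤ K * (1 / (a - ε)) := by
        have h := mul_le_mul_of_nonneg_left h3' he0.le
        have hx : e * (K * I) = K * X := by rw [hXdef]; ring
        have hKX : K * X ≤ K * (1 / (a - ε)) := mul_le_mul_of_nonneg_left hXhigh hK0
        linarith [hx ▸ h]
      have h6 : min ((L - ε) * ((1 - δ) / (a + ε))) ((L - ε) / (a - ε)) ≤ e * J := by
        rcases le_or_gt 0 (L - ε) with hLε | hLε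
        · refine le_trans (min_le_left _ _) (le_trans ?_ h5)
          exact mul_le_mul_of_nonneg_left hXlow hLε
        · refine le_trans (min_le_right _ _) (le_trans ?_ h5)
          rw [div_eq_mul_one_div]
          exact mul_le_mul_of_nonpos_left hXhigh hLε.le
      constructor
      · rw [hHe]
        simp only [hBdef]
        rw [← hedef, ← hδdef]
        linarith
      · rw [hHe]
        have hCe : C * e ≤ |C| := by
          calc C * e ≤ |C| * e := mul_le_mul_of_nonneg_right (le_abs_self C) he0.le
            _ ≤ |C| * 1 := mul_le_mul_of_nonneg_left he1 (abs_nonneg C)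
            _ = |C| := mul_one _
        linarith
    -- limit of B
    have hnegF : Tendsto (fun t => -F t) atTop atBot := tendsto_neg_atBot_iff.mpr hFtop
    have hexp0 : Tendsto (fun t => Real.exp (-F t)) atTop (nhds 0) :=
      Real.tendsto_exp_atBot.comp hnegF
    have hδ0' : Tendsto (fun t => Real.exp (F T - F t)) atTop (nhds 0) := by
      refine Real.tendsto_exp_atBot.comp ?_
      have : Tendsto (fun t => -F t + F T) atTop atBot :=
        tendsto_atBot_add_const_right _ _ hnegF
      simpa [sub_eq_add_neg, add_comm] using this
    have hBlim : Tendsto B atTop (nhds m) := by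
      have h1 : Tendsto (fun t => C * Real.exp (-F t)) atTop (nhds (C * 0)) :=
        tendsto_const_nhds.mul hexp0
      have h2 : Tendsto (fun t => (L - ε) * ((1 - Real.exp (F T - F t)) / (a + ε)))
          atTop (nhds ((L - ε) * ((1 - 0) / (a + ε)))) :=
        tendsto_const_nhds.mul ((tendsto_const_nhds.sub hδ0').div_const _)
      have h3 := h1.add (h2.min (tendsto_const_nhds :
        Tendsto (fun _ : ℝ => (L - ε) / (a - ε)) atTop _))
      have heq : C * 0 + min ((L - ε) * ((1 - 0) / (a + ε))) ((L - ε) / (a - ε)) = m := by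
        rw [hmdef]; norm_num [mul_one_div]; simp [div_eq_mul_inv]
      rw [heq] at h3
      exact h3
    have hBH : ∀ᶠ t in atTop, B t ≤ H t := by
      filter_upwards [eventually_ge_atTop T] with t ht using (hmain t ht).1
    have hBbd : IsBoundedUnder (· ≥ ·) atTop B :=
      ⟨m - 1, eventually_map.mpr (hBlim.eventually (eventually_ge_nhds (by linarith)))⟩
    have hHcb : IsCoboundedUnder (· ≥ ·) atTop H := by
      apply IsBoundedUnder.isCoboundedUnder_ge
      refine ⟨|C| + K * (1 / (a - ε)), eventually_map.mpr ?_⟩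
      filter_upwards [eventually_ge_atTop T] with t ht using (hmain t ht).2
    calc m = liminf B atTop := hBlim.liminf_eq.symm
      _ ≤ liminf H atTop := liminf_le_liminf hBH hBbd hHcb
  -- conclude by taking ε → 0⁺
  have htend : Tendsto (fun ε : ℝ => min ((L - ε) / (a + ε)) ((L - ε) / (a - ε)))
      (nhdsWithin 0 (Set.Ioi 0)) (nhds ((1 / a) * L)) := by
    have h1 : Tendsto (fun ε : ℝ => (L - ε) / (a + ε)) (nhds 0) (nhds ((L - 0) / (a + 0))) :=
      (tendsto_const_nhds.sub tendsto_id).div (tendsto_const_nhds.add tendsto_id)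
        (by simpa using ha0.ne')
    have h2 : Tendsto (fun ε : ℝ => (L - ε) / (a - ε)) (nhds 0) (nhds ((L - 0) / (a - 0))) :=
      (tendsto_const_nhds.sub tendsto_id).div (tendsto_const_nhds.sub tendsto_id)
        (by simpa using ha0.ne')
    have h3 := (h1.min h2).mono_left (nhdsWithin_le_nhds :
      nhdsWithin (0:ℝ) (Set.Ioi 0) ≤ nhds 0)
    have heq : min ((L - 0) / (a + 0)) ((L - 0) / (a - 0)) = (1 / a) * L := by
      norm_num
      rw [div_eq_mul_inv, mul_comm]
    rwa [heq] at h3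
  refine le_of_tendsto htend ?_
  filter_upwards [Ioo_mem_nhdsGT_of_mem (Set.mem_Ico.mpr ⟨le_refl 0, ha0⟩)] with ε hε
  exact key ε hε
end
end
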